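/- arXiv:2101.08208 — 4 statements merged into one kernel-verified Lean document; each statement's English description precedes it below -/
import Mathlib

section
/- Let S, S̃ ∈ ℝ^{n×n} be positive definite and A₁,...,A_m ∈ ℝ^{n×n} symmetric. Define H ∈ ℝ^{m×m} by H_{jk} = tr[S⁻¹ A_j S⁻¹ A_k] and H̃ by H̃_{jk} = tr[S̃⁻¹ A_j S̃⁻¹ A_k]. If α_S⁻¹ S ⪯ S̃ ⪯ α_S S for some α_S ≥ 1 (in the PSD order), then α_S⁻² H ⪯ H̃ ⪯ α_S² H. -/
/-!
Inversion is antitone in the Loewner order: for `0 < A ≤ B` the block matrix `[[B, 1], [1, A⁻¹]]`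
is positive semidefinite (its Schur complement at `A⁻¹` is `B - A`), hence so is its Schur
complement `A⁻¹ - B⁻¹` at `B`. This gives `α⁻¹ S⁻¹ ⪯ S̃⁻¹ ⪯ α S⁻¹`. The quadratic form of `H` at
`x` is `tr (S⁻¹ M S⁻¹ M)` with `M = ∑ xⱼ Aⱼ`, and `P ↦ tr (P Mᴴ P M)` is monotone on positive
semidefinite matrices since
`tr (C Mᴴ C M) - tr (B Mᴴ B M) = tr ((C - B) Mᴴ C M) + tr (B Mᴴ (C - B) M)`
is a sum of traces of products of positive semidefinite matrices. Scaling `P` by `c` scales the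
form by `c²`.
-/

open Matrix
open scoped ComplexOrder MatrixOrder

namespace Matrix

variable {𝕜 n ι : Type*} [RCLike 𝕜] [Fintype n]

section Loewner

variable [DecidableEq n]

theorem PosSemidef.trace_mul_nonneg {A B : Matrix n n 𝕜} (hA : A.PosSemidef) (hB : B.PosSemidef) :
    0 ≤ (A * B).trace := by
  obtain ⟨X, rfl⟩ := CStarAlgebra.nonneg_iff_eq_star_mul_self.mp hA.nonneg
  rw [star_eq_conjTranspose, Matrix.mul_assoc, trace_mul_comm]
  exact (hB.mul_mul_conjTranspose_same X).trace_nonneg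

theorem trace_mul_conjTranspose_mul_mul_le_of_le {B C : Matrix n n 𝕜} (hB : 0 ≤ B) (hBC : B ≤ C)
    (M : Matrix n n 𝕜) : (B * Mᴴ * B * M).trace ≤ (C * Mᴴ * C * M).trace := by
  have hC : 0 ≤ C := hB.trans hBC
  have hsplit : C * Mᴴ * C * M
      = B * Mᴴ * B * M + ((C - B) * (Mᴴ * C * M) + B * (Mᴴ * (C - B) * M)) := by
    noncomm_ring
  rw [hsplit, trace_add, le_add_iff_nonneg_right, trace_add]
  exact add_nonneg ((le_iff.mp hBC).trace_mul_nonneg (hC.posSemidef.conjTranspose_mul_mul_same M))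
    (hB.posSemidef.trace_mul_nonneg ((le_iff.mp hBC).conjTranspose_mul_mul_same M))

theorem PosDef.inv_le_inv_of_le {A B : Matrix n n 𝕜} (hA : A.PosDef) (hAB : A ≤ B) : B⁻¹ ≤ A⁻¹ := by
  have hB : B.PosDef := by simpa using hA.add_posSemidef hAB
  let _ := hB.isUnit.invertible
  let _ := hA.isUnit.invertible
  have hblock : (fromBlocks B 1 1ᴴ A⁻¹).PosSemidef := by
    rw [PosDef.fromBlocks₂₂ _ _ hA.inv, inv_inv_of_invertible]
    simpa [le_iff] using hAB
  rw [PosDef.fromBlocks₁₁ _ _ hB] at hblock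
  simpa [le_iff] using hblock

end Loewner

def traceHessian (P : Matrix n n 𝕜) (A : ι → Matrix n n 𝕜) : Matrix ι ι 𝕜 :=
  of fun j k => (P * A j * P * A k).trace

theorem traceHessian_smul (c : 𝕜) (P : Matrix n n 𝕜) (A : ι → Matrix n n 𝕜) :
    traceHessian (c • P) A = c ^ 2 • traceHessian P A := by
  ext j k
  simp [traceHessian, sq, mul_assoc]

theorem isHermitian_traceHessian {P : Matrix n n 𝕜} (hP : P.IsHermitian) {A : ι → Matrix n n 𝕜}
    (hA : ∀ j, (A j).IsHermitian) : (traceHessian P A).IsHermitian := by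
  ext j k
  rw [conjTranspose_apply, traceHessian, of_apply, of_apply, ← trace_conjTranspose]
  simp only [conjTranspose_mul, hP.eq, (hA _).eq, ← Matrix.mul_assoc]
  rw [trace_mul_comm]
  simp only [Matrix.mul_assoc]

theorem dotProduct_traceHessian_mulVec [Fintype ι] (P : Matrix n n 𝕜) {A : ι → Matrix n n 𝕜}
    (hA : ∀ j, (A j).IsHermitian) (x : ι → 𝕜) :
    star x ⬝ᵥ (traceHessian P A *ᵥ x)
      = (P * (∑ j, x j • A j)ᴴ * P * ∑ j, x j • A j).trace := by
  simp only [conjTranspose_sum, conjTranspose_smul, (hA _).eq, Matrix.sum_mul,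
    Matrix.mul_smul, Matrix.smul_mul, trace_sum, trace_smul, dotProduct, mulVec, traceHessian,
    of_apply, Finset.mul_sum, smul_eq_mul, Pi.star_apply]
  rw [Finset.sum_comm]
  exact Finset.sum_congr rfl fun j _ => Finset.sum_congr rfl fun k _ => by ring

theorem traceHessian_le_traceHessian [Fintype ι] [DecidableEq n] {B C : Matrix n n 𝕜}
    (hB : 0 ≤ B) (hBC : B ≤ C) {A : ι → Matrix n n 𝕜} (hA : ∀ j, (A j).IsHermitian) :
    traceHessian B A ≤ traceHessian C A := by
  refine .of_dotProduct_mulVec_nonneg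
    ((isHermitian_traceHessian (hB.trans hBC).posSemidef.1 hA).sub
      (isHermitian_traceHessian hB.posSemidef.1 hA)) fun x => ?_
  rw [sub_mulVec, dotProduct_sub, sub_nonneg, dotProduct_traceHessian_mulVec _ hA,
    dotProduct_traceHessian_mulVec _ hA]
  exact trace_mul_conjTranspose_mul_mul_le_of_le hB hBC _

end Matrix

/-- Approximate Hessian: if `α⁻¹ S ⪯ S̃ ⪯ α S` (Loewner order) with `α ≥ 1`, then the
Hessians `H_{jk} = tr[S⁻¹ A_j S⁻¹ A_k]` and `H̃_{jk} = tr[S̃⁻¹ A_j S̃⁻¹ A_k]` satisfy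
`α⁻² H ⪯ H̃ ⪯ α² H`. -/
theorem approximate_hessian (m n : ℕ) (α : ℝ) (hα : 1 ≤ α)
    (S St : Matrix (Fin n) (Fin n) ℝ) (hS : S.PosDef) (hSt : St.PosDef)
    (A : Fin m → Matrix (Fin n) (Fin n) ℝ) (hA : ∀ j, (A j)ᵀ = A j)
    (H Ht : Matrix (Fin m) (Fin m) ℝ)
    (hH : ∀ j k, H j k = (S⁻¹ * A j * S⁻¹ * A k).trace)
    (hHt : ∀ j k, Ht j k = (St⁻¹ * A j * St⁻¹ * A k).trace)
    (hlow : (St - α⁻¹ • S).PosSemidef) (hup : (α • S - St).PosSemidef) :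
    (Ht - (α ^ 2)⁻¹ • H).PosSemidef ∧ ((α ^ 2) • H - Ht).PosSemidef := by
  have hα0 : 0 < α := zero_lt_one.trans_le hα
  have hA_herm (j) : (A j).IsHermitian := (conjTranspose_eq_transpose_of_trivial _).trans (hA j)
  have hH_eq : H = traceHessian S⁻¹ A := ext hH
  have hHt_eq : Ht = traceHessian St⁻¹ A := ext hHt
  have hinv_smul (c : ℝ) (hc : 0 < c) : (c • S)⁻¹ = c⁻¹ • S⁻¹ :=
    inv_smul' S (Units.mk0 c hc.ne') ((isUnit_iff_isUnit_det S).mp hS.isUnit)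
  have hinv_low : α⁻¹ • S⁻¹ ≤ St⁻¹ := hinv_smul α hα0 ▸ hSt.inv_le_inv_of_le hup
  have hinv_up : St⁻¹ ≤ α • S⁻¹ := by
    simpa [hinv_smul _ (inv_pos.mpr hα0)] using
      (hS.smul (inv_pos.mpr hα0)).inv_le_inv_of_le hlow
  refine ⟨le_iff.mp ?_, le_iff.mp ?_⟩
  · calc (α ^ 2)⁻¹ • H = traceHessian (α⁻¹ • S⁻¹) A := by
          rw [traceHessian_smul, hH_eq, inv_pow]
      _ ≤ Ht := hHt_eq ▸ traceHessian_le_traceHessian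
          (smul_nonneg (by positivity) hS.inv.posSemidef.nonneg) hinv_low hA_herm
  · calc Ht ≤ traceHessian (α • S⁻¹) A := hHt_eq ▸ traceHessian_le_traceHessian
          hSt.inv.posSemidef.nonneg hinv_up hA_herm
      _ = α ^ 2 • H := by rw [traceHessian_smul, hH_eq]
end

section
/- Let g ∈ ℝⁿ be a nonnegative non-increasing vector (g₁ ≥ g₂ ≥ ... ≥ gₙ ≥ 0), and let Z, Z' ∈ ℝ^{n×n} be symmetric matrices. Define Φ_g(M) = Σᵢ gᵢ · |λ(M)|_{[i]} where |λ(M)|_{[i]} is the i-th largest absolute eigenvalue of M. If there exists a permutation π of [n] with |λ(Z')_{π(i)}| = |λ(Z')|_{[i]} and Σᵢ (λ(Z)_{π(i)} - λ(Z')_{π(i)})² ≤ δ², then Φ_g(Z') ≤ Φ_g(Z) + δ·‖g‖₂. -/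
open Matrix

/-- "S move" potential bound: for nonnegative non-increasing `g` and symmetric `Z, Z'`,
if `π` sorts `|λ(Z')|` in decreasing order (so `|λ(Z')_{π(i)}| = |λ(Z')|_{[i]}`), `σ` sorts
`|λ(Z)|` in decreasing order, and `Σᵢ (λ(Z)_{π(i)} - λ(Z')_{π(i)})² ≤ δ²`, then
`Φ_g(Z') ≤ Φ_g(Z) + δ‖g‖₂`, where `Φ_g(M) = Σᵢ gᵢ |λ(M)|_{[i]}`. -/
theorem potential_S_move (n : ℕ) (g : Fin n → ℝ) (δ : ℝ) (hδ : 0 ≤ δ)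
    (hg0 : ∀ i, 0 ≤ g i) (hganti : ∀ i j : Fin n, i ≤ j → g j ≤ g i)
    (Z Z' : Matrix (Fin n) (Fin n) ℝ) (hZ : Z.IsHermitian) (hZ' : Z'.IsHermitian)
    (π σ : Equiv.Perm (Fin n))
    (hπ : ∀ i j : Fin n, i ≤ j → |hZ'.eigenvalues (π j)| ≤ |hZ'.eigenvalues (π i)|)
    (hσ : ∀ i j : Fin n, i ≤ j → |hZ.eigenvalues (σ j)| ≤ |hZ.eigenvalues (σ i)|)
    (hclose : ∑ i, (hZ.eigenvalues (π i) - hZ'.eigenvalues (π i)) ^ 2 ≤ δ ^ 2) :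
    ∑ i, g i * |hZ'.eigenvalues (π i)| ≤
      (∑ i, g i * |hZ.eigenvalues (σ i)|) + δ * Real.sqrt (∑ i, g i ^ 2) := by
  set a : Fin n → ℝ := fun i => hZ.eigenvalues i with ha
  set b : Fin n → ℝ := fun i => hZ'.eigenvalues i with hb
  -- Step 1: pointwise triangle inequality
  have step1 : ∑ i, g i * |b (π i)| ≤
      (∑ i, g i * |a (π i)|) + ∑ i, g i * |a (π i) - b (π i)| := by
    rw [← Finset.sum_add_distrib]
    refine Finset.sum_le_sum fun i _ => ?_
    rw [← mul_add]
    refine mul_le_mul_of_nonneg_left ?_ (hg0 i)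
    have : |b (π i)| = |a (π i) - (a (π i) - b (π i))| := by ring_nf
    rw [this]
    exact (abs_sub (a (π i)) (a (π i) - b (π i)))
  -- Step 2: rearrangement
  have step2 : ∑ i, g i * |a (π i)| ≤ ∑ i, g i * |a (σ i)| := by
    have hmono : Monovary g (fun i => |a (σ i)|) := by
      intro i j hij
      rcases le_or_gt i j with h | h
      · exact absurd (hσ i j h) (not_le_of_gt hij)
      · exact hganti j i h.le
    have := hmono.sum_smul_comp_perm_le_sum_smul (σ := π.trans σ.symm)
    simpa [smul_eq_mul] using this
  -- Step 3: Cauchy-Schwarz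
  have step3 : ∑ i, g i * |a (π i) - b (π i)| ≤ δ * Real.sqrt (∑ i, g i ^ 2) := by
    have hnn : 0 ≤ ∑ i, g i * |a (π i) - b (π i)| :=
      Finset.sum_nonneg fun i _ => mul_nonneg (hg0 i) (abs_nonneg _)
    have hcs := Real.sum_mul_le_sqrt_mul_sqrt Finset.univ g
      (fun i => |a (π i) - b (π i)|)
    have hd : Real.sqrt (∑ i, |a (π i) - b (π i)| ^ 2) ≤ δ := by
      have : (∑ i, |a (π i) - b (π i)| ^ 2) = ∑ i, (a (π i) - b (π i)) ^ 2 := by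
        simp [sq_abs]
      rw [this]
      calc Real.sqrt (∑ i, (a (π i) - b (π i)) ^ 2) ≤ Real.sqrt (δ ^ 2) :=
            Real.sqrt_le_sqrt hclose
        _ = δ := by rw [Real.sqrt_sq hδ]
    calc ∑ i, g i * |a (π i) - b (π i)| ≤
          Real.sqrt (∑ i, g i ^ 2) * Real.sqrt (∑ i, |a (π i) - b (π i)| ^ 2) := hcs
      _ ≤ Real.sqrt (∑ i, g i ^ 2) * δ :=
          mul_le_mul_of_nonneg_left hd (Real.sqrt_nonneg _)
      _ = δ * Real.sqrt (∑ i, g i ^ 2) := mul_comm _ _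
  calc ∑ i, g i * |b (π i)| ≤ (∑ i, g i * |a (π i)|) + ∑ i, g i * |a (π i) - b (π i)| := step1
    _ ≤ (∑ i, g i * |a (σ i)|) + δ * Real.sqrt (∑ i, g i ^ 2) := add_le_add step2 step3
end

section
/- Let g ∈ ℝ₊ⁿ be non-increasing and λ ∈ ℝⁿ with |λ_{π(1)}| ≥ ... ≥ |λ_{π(n)}| for a sorting permutation π. Suppose r ≤ n/2 satisfies |λ_{π(r)}| ≥ ε/e, and |λ_{π(2r)}| ≤ (1 - 1/log n)|λ_{π(r)}|. Then Σ_{i=1}^{n} g_i |λ_{π(i)}| - Σ_{i=1}^{n-2r} g_i |λ_{π(2r+i)}| ≥ (ε/(2e log n)) · (2r) · g_{2r}. -/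
open Finset

/-!
Write `D = ∑_{i ≤ n} g i * a i - ∑_{i ≤ n - 2r} g i * a (2r + i)` as `∑_{i ≤ n} g i * (a i - b i)`,
where `b` is `a` shifted by `2r` and padded with zeros. Every term is nonnegative, and for
`i ≤ r` the term is at least `g (2r) * (a r - a (2r))`, which the gap hypothesis bounds below by
`g (2r) * a r / log n ≥ g (2r) * (ε / e) / log n`.
-/

lemma sum_Icc_shift_eq_sum_ite (g a : ℕ → ℝ) (s n : ℕ) :
    ∑ i ∈ Icc 1 (n - s), g i * a (s + i) =
      ∑ i ∈ Icc 1 n, g i * (if i ≤ n - s then a (s + i) else 0) := by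
  simp_rw [mul_ite, mul_zero]
  rw [← sum_filter]
  congr 1
  ext i
  simp only [mem_Icc, mem_filter]
  omega

lemma ite_shift_le {a : ℕ → ℝ} (ha0 : ∀ i, 0 ≤ a i) (ha : Antitone a) {i j : ℕ} (s m : ℕ)
    (hj : j ≤ s + i) : (if i ≤ m then a (s + i) else 0) ≤ a j := by
  split_ifs
  · exact ha hj
  · exact ha0 j

lemma mul_sub_le_sum_sub_sum_shift {g a : ℕ → ℝ} (hg0 : ∀ i, 0 ≤ g i) (hg : Antitone g)
    (ha0 : ∀ i, 0 ≤ a i) (ha : Antitone a) {k s n : ℕ} (hks : k ≤ s) (hkn : k ≤ n) :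
    k * (g s * (a k - a s)) ≤
      ∑ i ∈ Icc 1 n, g i * a i - ∑ i ∈ Icc 1 (n - s), g i * a (s + i) := by
  rw [sum_Icc_shift_eq_sum_ite, ← sum_sub_distrib]
  simp_rw [← mul_sub]
  calc (k : ℝ) * (g s * (a k - a s))
      = ∑ _i ∈ Icc 1 k, g s * (a k - a s) := by simp
    _ ≤ ∑ i ∈ Icc 1 k, g i * (a i - if i ≤ n - s then a (s + i) else 0) := by
        refine sum_le_sum fun i hi => ?_
        have hik : i ≤ k := (mem_Icc.1 hi).2
        have hb := ite_shift_le ha0 ha s (n - s) (j := s) (i := i) (by omega)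
        exact mul_le_mul (hg (by omega)) (by linarith [ha hik]) (sub_nonneg.2 (ha hks)) (hg0 i)
    _ ≤ ∑ i ∈ Icc 1 n, g i * (a i - if i ≤ n - s then a (s + i) else 0) := by
        refine sum_le_sum_of_subset_of_nonneg (Icc_subset_Icc le_rfl hkn) fun i _ _ => ?_
        exact mul_nonneg (hg0 i) (sub_nonneg.2 (ite_shift_le ha0 ha s (n - s) (by omega)))

theorem potential_St_move_general (n r : ℕ) (ε : ℝ) (g a : ℕ → ℝ)
    (hlog : 1 < Real.log n)
    (hg0 : ∀ i, 0 ≤ g i) (hganti : ∀ i j : ℕ, i ≤ j → g j ≤ g i)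
    (ha0 : ∀ i, 0 ≤ a i) (haanti : ∀ i j : ℕ, i ≤ j → a j ≤ a i)
    (hrn : 2 * r ≤ n)
    (h1 : ε / Real.exp 1 ≤ a r)
    (h2 : a (2 * r) ≤ (1 - 1 / Real.log n) * a r) :
    ε / (2 * Real.exp 1 * Real.log n) * (2 * r) * g (2 * r) ≤
      (∑ i ∈ Finset.Icc 1 n, g i * a i) -
        ∑ i ∈ Finset.Icc 1 (n - 2 * r), g i * a (2 * r + i) := by
  set L := Real.log n
  have hL : 0 < L := one_pos.trans hlog
  have hgap : ε / Real.exp 1 / L ≤ a r - a (2 * r) := by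
    have : a r / L ≤ a r - a (2 * r) := by
      rw [one_sub_mul, one_div_mul_eq_div] at h2
      linarith
    exact (div_le_div_of_nonneg_right h1 hL.le).trans this
  calc ε / (2 * Real.exp 1 * L) * (2 * r) * g (2 * r)
      = r * (g (2 * r) * (ε / Real.exp 1 / L)) := by field_simp
    _ ≤ r * (g (2 * r) * (a r - a (2 * r))) := by gcongr; exact hg0 _
    _ ≤ _ := mul_sub_le_sum_sub_sum_shift hg0 (fun i j h => hganti i j h) ha0
        (fun i j h => haanti i j h) (by omega) (by omega)

/-- "S̃ move" potential decrease (Case 2): `g` is nonnegative and non-increasing,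
`a i = |λ_{π(i)}|` is the non-increasing sequence of absolute eigenvalues (1-based
indexing), `r ≤ n/2` satisfies `a r ≥ ε/e` and `a (2r) ≤ (1 - 1/log n) a r`. Then zeroing
out the `2r` largest absolute eigenvalues decreases the potential by at least
`(ε/(2e log n)) · 2r · g_{2r}`. -/
theorem potential_St_move (n r : ℕ) (ε : ℝ) (g a : ℕ → ℝ)
    (hn : 2 ≤ n) (hlog : 1 < Real.log n)
    (hg0 : ∀ i, 0 ≤ g i) (hganti : ∀ i j : ℕ, i ≤ j → g j ≤ g i)
    (ha0 : ∀ i, 0 ≤ a i) (haanti : ∀ i j : ℕ, i ≤ j → a j ≤ a i)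
    (hε : 0 < ε) (hr : 1 ≤ r) (hrn : 2 * r ≤ n)
    (h1 : ε / Real.exp 1 ≤ a r)
    (h2 : a (2 * r) ≤ (1 - 1 / Real.log n) * a r) :
    ε / (2 * Real.exp 1 * Real.log n) * (2 * r) * g (2 * r) ≤
      (∑ i ∈ Finset.Icc 1 n, g i * a i) -
        ∑ i ∈ Finset.Icc 1 (n - 2 * r), g i * a (2 * r + i) :=
  potential_St_move_general n r ε g a hlog hg0 hganti ha0 haanti hrn h1 h2
end

section
/- Let T, n ∈ ℕ with n ≥ 1, and suppose reals r₁,...,r_T ∈ [1,n] satisfy: for every nonnegative non-increasing g ∈ ℝⁿ, Σ_{t=1}^T r_t · g_{⌈r_t⌉} ≤ C·T·‖g‖₂. Then for any exponent θ ∈ (1/2, 1], Σ_{t=1}^T r_t^θ ≤ C'·T·n^{θ - 1/2}, where C' depends only on C and θ. -/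
/-!
Test the hypothesis with the non-increasing weights `g_i = i^(θ-1)`. Since `⌈r⌉ ≤ 2r`, each
term `r · g_{⌈r⌉}` is at least `r^θ / 2`, while `‖g‖₂² = Σ_{i ≤ n} i^(2θ-2) ≤ n^(2θ-1) / (2θ-1)`
by comparing each term with the increment `(i^s - (i-1)^s) / s` of the telescoping sum
(concavity of `x ↦ x^s`, `s = 2θ - 1 ∈ (0, 1]`). Hence `C' = 2|C| / √(2θ-1)` works.
-/

open Finset

lemma Real.sub_one_rpow_le {s x : ℝ} (hs0 : 0 ≤ s) (hs1 : s ≤ 1) (hx : 1 ≤ x) :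
    (x - 1) ^ s ≤ x ^ s - s * x ^ (s - 1) := by
  have hx0 : 0 < x := zero_lt_one.trans_le hx
  have hinv : -1 ≤ -x⁻¹ := neg_le_neg (inv_le_one_of_one_le₀ hx)
  have bernoulli : (1 + -x⁻¹) ^ s ≤ 1 + s * -x⁻¹ :=
    rpow_one_add_le_one_add_mul_self hinv hs0 hs1
  calc (x - 1) ^ s = x ^ s * (1 + -x⁻¹) ^ s := by
        rw [← Real.mul_rpow hx0.le (by linarith)]
        congr 1; field_simp; ring
    _ ≤ x ^ s * (1 + s * -x⁻¹) := by gcongr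
    _ = x ^ s - s * x ^ (s - 1) := by rw [Real.rpow_sub_one hx0.ne']; ring

lemma sum_Icc_rpow_sub_one_le {s : ℝ} (hs0 : 0 < s) (hs1 : s ≤ 1) (n : ℕ) :
    ∑ i ∈ Icc 1 n, (i : ℝ) ^ (s - 1) ≤ (n : ℝ) ^ s / s := by
  induction n with
  | zero => simp [Real.zero_rpow hs0.ne']
  | succ n ih =>
    have step := Real.sub_one_rpow_le hs0.le hs1 (x := (n + 1 : ℕ)) (by simp)
    rw [sum_Icc_succ_top (by omega)]
    push_cast at step ⊢
    rw [add_sub_cancel_right] at step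
    rw [le_div_iff₀ hs0] at ih ⊢
    rw [add_mul]
    linarith

lemma rpow_le_two_mul_mul_ceil_rpow {x θ : ℝ} (hθ0 : 0 ≤ θ) (hθ1 : θ ≤ 1) (hx : 1 ≤ x) :
    x ^ θ ≤ 2 * (x * (⌈x⌉₊ : ℝ) ^ (θ - 1)) := by
  have hx0 : 0 < x := zero_lt_one.trans_le hx
  have hceil : (⌈x⌉₊ : ℝ) ≤ 2 * x := by linarith [Nat.ceil_lt_add_one hx0.le]
  have hceil0 : (0 : ℝ) < ⌈x⌉₊ := by simpa using hx0
  have htwo : (2 : ℝ)⁻¹ ≤ 2 ^ (θ - 1) := by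
    rw [← Real.rpow_neg_one]
    exact Real.rpow_le_rpow_of_exponent_le (by norm_num) (by linarith)
  calc x ^ θ = 2 * (x * (2⁻¹ * x ^ (θ - 1))) := by
        rw [Real.rpow_sub_one hx0.ne']; field_simp
    _ ≤ 2 * (x * (2 ^ (θ - 1) * x ^ (θ - 1))) := by gcongr
    _ = 2 * (x * (2 * x) ^ (θ - 1)) := by rw [Real.mul_rpow (by norm_num) hx0.le]
    _ ≤ 2 * (x * (⌈x⌉₊ : ℝ) ^ (θ - 1)) := by
        gcongr 2 * (x * ?_)
        exact Real.rpow_le_rpow_of_nonpos hceil0 hceil (by linarith)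

/-- `i^(θ-1)`, with `g_0 = g_1` rather than the junk value `0 ^ (θ - 1) = 0`, which would break
antitonicity. -/
noncomputable def rankWeight (θ : ℝ) (i : ℕ) : ℝ := ((max i 1 : ℕ) : ℝ) ^ (θ - 1)

lemma rankWeight_nonneg (θ : ℝ) (i : ℕ) : 0 ≤ rankWeight θ i :=
  Real.rpow_nonneg (Nat.cast_nonneg _) _

lemma rankWeight_of_one_le (θ : ℝ) {i : ℕ} (hi : 1 ≤ i) : rankWeight θ i = (i : ℝ) ^ (θ - 1) := by
  rw [rankWeight, max_eq_left hi]

lemma rankWeight_antitone {θ : ℝ} (hθ : θ ≤ 1) : Antitone (rankWeight θ) := fun i j hij =>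
  Real.rpow_le_rpow_of_nonpos (by simp) (by exact_mod_cast max_le_max hij le_rfl) (by linarith)

lemma sqrt_sum_sq_rankWeight_le {θ : ℝ} (hθ1 : 1 / 2 < θ) (hθ2 : θ ≤ 1) (n : ℕ) :
    √(∑ i ∈ Icc 1 n, rankWeight θ i ^ 2) ≤ (n : ℝ) ^ (θ - 1 / 2) / √(2 * θ - 1) := by
  have hsum : ∑ i ∈ Icc 1 n, rankWeight θ i ^ 2 = ∑ i ∈ Icc 1 n, (i : ℝ) ^ ((2 * θ - 1) - 1) := by
    refine sum_congr rfl fun i hi => ?_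
    have hi1 := (mem_Icc.mp hi).1
    rw [rankWeight_of_one_le θ hi1, ← Real.rpow_natCast, ← Real.rpow_mul (Nat.cast_nonneg i)]
    ring_nf
  calc √(∑ i ∈ Icc 1 n, rankWeight θ i ^ 2) ≤ √((n : ℝ) ^ (2 * θ - 1) / (2 * θ - 1)) := by
        rw [hsum]
        exact Real.sqrt_le_sqrt (sum_Icc_rpow_sub_one_le (by linarith) (by linarith) n)
    _ = (n : ℝ) ^ (θ - 1 / 2) / √(2 * θ - 1) := by
        rw [Real.sqrt_div' _ (by linarith), Real.sqrt_eq_rpow, ← Real.rpow_mul (Nat.cast_nonneg n)]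
        ring_nf

/-- Abstract amortization: if ranks `r_t ∈ [1,n]` satisfy
`Σ_t r_t · g_{⌈r_t⌉} ≤ C·T·‖g‖₂` for every nonnegative non-increasing `g ∈ ℝⁿ`, then for
any exponent `θ ∈ (1/2, 1]`, `Σ_t r_t^θ ≤ C'·T·n^{θ-1/2}` where `C'` depends only on `C`
and `θ`. -/
theorem amortized_rank_sum (C θ : ℝ) (hθ1 : 1 / 2 < θ) (hθ2 : θ ≤ 1) :
    ∃ C' : ℝ, ∀ (T n : ℕ) (r : Fin T → ℝ),
      1 ≤ n →
      (∀ t, 1 ≤ r t ∧ r t ≤ (n : ℝ)) →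
      (∀ g : ℕ → ℝ, (∀ i, 0 ≤ g i) → (∀ i j : ℕ, i ≤ j → g j ≤ g i) →
        ∑ t, r t * g ⌈r t⌉₊ ≤
          C * T * Real.sqrt (∑ i ∈ Finset.Icc 1 n, g i ^ 2)) →
      ∑ t, r t ^ θ ≤ C' * T * (n : ℝ) ^ (θ - 1 / 2) := by
  refine ⟨2 * |C| / √(2 * θ - 1), fun T n r _ hr hg => ?_⟩
  have hpointwise (t : Fin T) : r t ^ θ ≤ 2 * (r t * rankWeight θ ⌈r t⌉₊) := by
    rw [rankWeight_of_one_le θ (Nat.one_le_ceil_iff.mpr (by linarith [(hr t).1]))]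
    exact rpow_le_two_mul_mul_ceil_rpow (by linarith) hθ2 (hr t).1
  calc ∑ t, r t ^ θ ≤ ∑ t, 2 * (r t * rankWeight θ ⌈r t⌉₊) := sum_le_sum fun t _ => hpointwise t
    _ = 2 * ∑ t, r t * rankWeight θ ⌈r t⌉₊ := (mul_sum _ _ _).symm
    _ ≤ 2 * (C * T * √(∑ i ∈ Icc 1 n, rankWeight θ i ^ 2)) := by
        gcongr
        exact hg _ (rankWeight_nonneg θ) fun _ _ hij => rankWeight_antitone hθ2 hij
    _ ≤ 2 * (|C| * T * ((n : ℝ) ^ (θ - 1 / 2) / √(2 * θ - 1))) := by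
        gcongr
        · exact le_abs_self C
        · exact sqrt_sum_sq_rankWeight_le hθ1 hθ2 n
    _ = 2 * |C| / √(2 * θ - 1) * T * (n : ℝ) ^ (θ - 1 / 2) := by ring
end
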